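/- In the FIFO-based spanning tree construction where vehicle i's depth is d(i) = 1 + max{d(j) : j a conflict parent of i, j < i} (DFST rule), the resulting depth of each vehicle is greater than or equal to the depth assigned by the OPT-DFST rule d'(i) = min{n : n > max{d'(j) : j diverging parent} and n ∉ {d'(j) : j crossing parent}}, assuming both rules process vehicles in index order. -/
import Mathlib


/-- The OPT-DFST depth `d'` is pointwise at most the DFST depth `d`.
DFST: `d i = 1 + max{d j : j ∈ Div i ∪ Cross i}`;
OPT-DFST: `d' i` is the least `n` with `n > max{d' j : j ∈ Div i}` and
`n ∉ {d' j : j ∈ Cross i}`. Both rules process vehicles in index order,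
with parents of smaller index and `d 0 = d' 0 = 0`. -/
theorem opt_dfst_le_dfst (N : ℕ) (Div Cross : ℕ → Finset ℕ)
    (hparents : ∀ i, 1 ≤ i → i ≤ N → ∀ j ∈ Div i ∪ Cross i, j < i)
    (d d' : ℕ → ℕ) (hd0 : d 0 = 0) (hd'0 : d' 0 = 0)
    (hd : ∀ i, 1 ≤ i → i ≤ N → d i = 1 + (Div i ∪ Cross i).sup d)
    (hd' : ∀ i, 1 ≤ i → i ≤ N →
      IsLeast {n : ℕ | (Div i).sup d' < n ∧ n ∉ (Cross i).image d'} (d' i)) :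
    ∀ i, i ≤ N → d' i ≤ d i := by
  intro i
  induction i using Nat.strong_induction_on with
  | _ i ih =>
    intro hiN
    rcases Nat.eq_zero_or_pos i with rfl | hi
    · simp [hd0, hd'0]
    · have hdi := hd i hi hiN
      have key : ∀ j ∈ Div i ∪ Cross i, d' j ≤ (Div i ∪ Cross i).sup d := by
        intro j hj
        exact le_trans (ih j (hparents i hi hiN j hj) (le_of_lt (lt_of_lt_of_le (hparents i hi hiN j hj) hiN))) (Finset.le_sup hj)
      have hmem : d i ∈ {n : ℕ | (Div i).sup d' < n ∧ n ∉ (Cross i).image d'} := by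
        constructor
        · rw [hdi]
          have : (Div i).sup d' ≤ (Div i ∪ Cross i).sup d := by
            apply Finset.sup_le
            intro j hj
            exact key j (Finset.mem_union_left _ hj)
          omega
        · intro hmem
          obtain ⟨j, hj, hje⟩ := Finset.mem_image.mp hmem
          have := key j (Finset.mem_union_right _ hj)
          omega
      exact (hd' i hi hiN).2 hmem
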